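/- (First family, стability.) The ideal J is Poisson-stable: for all a, b ∈ J, the canonical Poisson bracket {a,b} lies in J. -/
import Mathlib


open MvPolynomial

/-- The canonical Poisson bracket on functions on the cotangent bundle of `ℂⁿ`:
`{f,g} = Σᵢ (∂f/∂yᵢ · ∂g/∂tᵢ − ∂f/∂tᵢ · ∂g/∂yᵢ)`, where `tᵢ` is the variable
indexed by `Sum.inl i` and `yᵢ` the one indexed by `Sum.inr i`. -/
noncomputable def pb (n : ℕ) (f g : MvPolynomial (Fin n ⊕ Fin n) ℂ) :
    MvPolynomial (Fin n ⊕ Fin n) ℂ :=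
  ∑ i : Fin n,
    (pderiv (Sum.inr i) f * pderiv (Sum.inl i) g -
     pderiv (Sum.inl i) f * pderiv (Sum.inr i) g)

/-- The embedding `φ : R → S` renaming each variable `i` to `Sum.inl i`. -/
noncomputable def phi (n : ℕ) :
    MvPolynomial (Fin n) ℂ →ₐ[ℂ] MvPolynomial (Fin n ⊕ Fin n) ℂ :=
  rename Sum.inl

/-- The fiberwise-linear function `ι(X) = Σᵢ φ(Xᵢ)·yᵢ` associated to a vector
field `X : Fin n → R`. -/
noncomputable def iota (n : ℕ) (Xf : Fin n → MvPolynomial (Fin n) ℂ) :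
    MvPolynomial (Fin n ⊕ Fin n) ℂ :=
  ∑ i : Fin n, phi n (Xf i) * MvPolynomial.X (Sum.inr i)

/-- The Lie bracket of vector fields: `[X,Y]ᵢ = Σⱼ (Xⱼ·∂Yᵢ/∂tⱼ − Yⱼ·∂Xᵢ/∂tⱼ)`. -/
noncomputable def lieVF (n : ℕ) (Xf Yf : Fin n → MvPolynomial (Fin n) ℂ) :
    Fin n → MvPolynomial (Fin n) ℂ :=
  fun i => ∑ j : Fin n, (Xf j * pderiv j (Yf i) - Yf j * pderiv j (Xf i))

/-- The ideal of the first family (2.5.2): generated by `y₁ − 1` and all products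
`(yᵢ − φ(ρᵢ))·(yⱼ − φ(ρⱼ))` (indices written `0,…,n−1`). -/
noncomputable def Jfam1 (n : ℕ) (hn : 0 < n) (ρ : Fin n → MvPolynomial (Fin n) ℂ) :
    Ideal (MvPolynomial (Fin n ⊕ Fin n) ℂ) :=
  Ideal.span ({MvPolynomial.X (Sum.inr (⟨0, hn⟩ : Fin n)) - 1} ∪
    Set.range (fun p : Fin n × Fin n =>
      (MvPolynomial.X (Sum.inr p.1) - phi n (ρ p.1)) *
      (MvPolynomial.X (Sum.inr p.2) - phi n (ρ p.2))))

section Aux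

variable {n : ℕ}

lemma pb_add_left (f f' g : MvPolynomial (Fin n ⊕ Fin n) ℂ) :
    pb n (f + f') g = pb n f g + pb n f' g := by
  simp only [pb, map_add]
  rw [← Finset.sum_add_distrib]
  exact Finset.sum_congr rfl fun i _ => by ring

lemma pb_add_right (f g g' : MvPolynomial (Fin n ⊕ Fin n) ℂ) :
    pb n f (g + g') = pb n f g + pb n f g' := by
  simp only [pb, map_add]
  rw [← Finset.sum_add_distrib]
  exact Finset.sum_congr rfl fun i _ => by ring

lemma pb_zero_left (g : MvPolynomial (Fin n ⊕ Fin n) ℂ) : pb n 0 g = 0 := by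
  simp [pb]

lemma pb_zero_right (f : MvPolynomial (Fin n ⊕ Fin n) ℂ) : pb n f 0 = 0 := by
  simp [pb]

lemma pb_mul_left (f f' g : MvPolynomial (Fin n ⊕ Fin n) ℂ) :
    pb n (f * f') g = f * pb n f' g + f' * pb n f g := by
  simp only [pb, pderiv_mul, Finset.mul_sum]
  rw [← Finset.sum_add_distrib]
  exact Finset.sum_congr rfl fun i _ => by ring

lemma pb_mul_right (f g g' : MvPolynomial (Fin n ⊕ Fin n) ℂ) :
    pb n f (g * g') = g * pb n f g' + g' * pb n f g := by
  simp only [pb, pderiv_mul, Finset.mul_sum]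
  rw [← Finset.sum_add_distrib]
  exact Finset.sum_congr rfl fun i _ => by ring

lemma pderiv_inr_phi (m : Fin n) (p : MvPolynomial (Fin n) ℂ) :
    pderiv (Sum.inr m) (phi n p) = 0 := by
  show pderiv (Sum.inr m) (rename Sum.inl p) = 0
  apply pderiv_eq_zero_of_notMem_vars
  intro h
  have := vars_rename (R := ℂ) Sum.inl p h
  simp at this

lemma pderiv_inl_phi (m : Fin n) (p : MvPolynomial (Fin n) ℂ) :
    pderiv (Sum.inl m) (phi n p) = phi n (pderiv m p) :=
  pderiv_rename Sum.inl_injective m p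

/-- Bracket with the generator `y₀ − 1` is `∂/∂t₀`. -/
lemma pb_u (z : Fin n) (b : MvPolynomial (Fin n ⊕ Fin n) ℂ) :
    pb n (MvPolynomial.X (Sum.inr z) - 1) b = pderiv (Sum.inl z) b := by
  simp only [pb, map_sub, pderiv_one, pderiv_X, sub_zero]
  rw [Finset.sum_congr rfl (g := fun i =>
      (if i = z then pderiv (Sum.inl z) b else 0))
      (fun i _ => by
        rcases eq_or_ne i z with rfl | h
        · simp [Pi.single_apply]
        · simp [Pi.single_apply, Ne.symm h, h])]
  simp

end Aux

/-- First family (2.5.2): the ideal `J` is Poisson-stable. -/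
theorem stmt_8 (n : ℕ) (hn : 0 < n) (ρ : Fin n → MvPolynomial (Fin n) ℂ)
    (hρ1 : ρ ⟨0, hn⟩ = 1)
    (hρd : ∀ i : Fin n, pderiv (⟨0, hn⟩ : Fin n) (ρ i) = 0) :
    ∀ a ∈ Jfam1 n hn ρ, ∀ b ∈ Jfam1 n hn ρ, pb n a b ∈ Jfam1 n hn ρ := by
  set z : Fin n := ⟨0, hn⟩
  set J := Jfam1 n hn ρ with hJ
  set e : Fin n → MvPolynomial (Fin n ⊕ Fin n) ℂ :=
    fun i => MvPolynomial.X (Sum.inr i) - phi n (ρ i) with he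
  -- generators
  have hu_mem : MvPolynomial.X (Sum.inr z) - 1 ∈ J :=
    Ideal.subset_span (Or.inl rfl)
  have hee_mem : ∀ i j, e i * e j ∈ J := fun i j =>
    Ideal.subset_span (Or.inr ⟨(i, j), rfl⟩)
  -- u equals e z
  have hu_eq : MvPolynomial.X (Sum.inr z) - 1 = e z := by
    simp [he, hρ1, map_one]
  -- ∂/∂t₀ of e i is 0
  have hde : ∀ i, pderiv (Sum.inl z) (e i) = 0 := by
    intro i
    simp [he, pderiv_inl_phi, hρd i, pderiv_X_of_ne (show Sum.inr i ≠ Sum.inl z by simp)]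
  -- bracket of u with a product of two e's vanishes
  have hkey_u : ∀ i j, pb n (MvPolynomial.X (Sum.inr z) - 1) (e i * e j) = 0 := by
    intro i j
    rw [pb_u, pderiv_mul, hde i, hde j]
    ring
  -- bracket of u with u vanishes
  have hkey_uu : pb n (MvPolynomial.X (Sum.inr z) - 1)
      (MvPolynomial.X (Sum.inr z) - 1) = 0 := by
    rw [pb_u]
    simp [pderiv_X_of_ne (show Sum.inr z ≠ Sum.inl z by simp)]
  -- antisymmetry
  have hanti : ∀ f g : MvPolynomial (Fin n ⊕ Fin n) ℂ, pb n f g = - pb n g f := by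
    intro f g
    simp only [pb, ← Finset.sum_neg_distrib]
    exact Finset.sum_congr rfl fun i _ => by ring
  -- bracket of generators lies in J
  have hgen : ∀ g ∈ ({MvPolynomial.X (Sum.inr (⟨0, hn⟩ : Fin n)) - 1} ∪
      Set.range (fun p : Fin n × Fin n =>
        (MvPolynomial.X (Sum.inr p.1) - phi n (ρ p.1)) *
        (MvPolynomial.X (Sum.inr p.2) - phi n (ρ p.2))) :
        Set (MvPolynomial (Fin n ⊕ Fin n) ℂ)),
      ∀ g' ∈ ({MvPolynomial.X (Sum.inr (⟨0, hn⟩ : Fin n)) - 1} ∪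
      Set.range (fun p : Fin n × Fin n =>
        (MvPolynomial.X (Sum.inr p.1) - phi n (ρ p.1)) *
        (MvPolynomial.X (Sum.inr p.2) - phi n (ρ p.2))) :
        Set (MvPolynomial (Fin n ⊕ Fin n) ℂ)),
      pb n g g' ∈ J := by
    rintro g (rfl | ⟨⟨i, j⟩, rfl⟩) g' (rfl | ⟨⟨k, l⟩, rfl⟩)
    · rw [hkey_uu]; exact J.zero_mem
    · rw [hkey_u k l]; exact J.zero_mem
    · rw [hanti, hkey_u i j, neg_zero]; exact J.zero_mem
    · -- both products of e's
      show pb n (e i * e j) (e k * e l) ∈ J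
      rw [pb_mul_left, pb_mul_right, pb_mul_right]
      have h1 : e i * (e k * pb n (e j) (e l) + e l * pb n (e j) (e k)) =
          (e i * e k) * pb n (e j) (e l) + (e i * e l) * pb n (e j) (e k) := by ring
      have h2 : e j * (e k * pb n (e i) (e l) + e l * pb n (e i) (e k)) =
          (e j * e k) * pb n (e i) (e l) + (e j * e l) * pb n (e i) (e k) := by ring
      rw [h1, h2]
      exact J.add_mem
        (J.add_mem (J.mul_mem_right _ (hee_mem i k)) (J.mul_mem_right _ (hee_mem i l)))
        (J.add_mem (J.mul_mem_right _ (hee_mem j k)) (J.mul_mem_right _ (hee_mem j l)))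
  -- reduce to generators via span induction twice
  intro a ha b hb
  induction ha using Submodule.span_induction with
  | mem g hg =>
    induction hb using Submodule.span_induction with
    | mem g' hg' => exact hgen g hg g' hg'
    | zero => rw [pb_zero_right]; exact J.zero_mem
    | add x y hx hy px py => rw [pb_add_right]; exact J.add_mem px py
    | smul r x hx px =>
      rw [smul_eq_mul, pb_mul_right]
      exact J.add_mem (Ideal.mul_mem_left _ _ px) (Ideal.mul_mem_right _ _ hx)
  | zero => rw [pb_zero_left]; exact J.zero_mem
  | add x y hx hy px py => rw [pb_add_left]; exact J.add_mem px py
  | smul r x hx px =>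
    rw [smul_eq_mul, pb_mul_left]
    exact J.add_mem (Ideal.mul_mem_left _ _ px) (Ideal.mul_mem_right _ _ hx)
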